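/- arXiv:1609.04593 — 4 statements merged into one kernel-verified Lean document; each statement's English description precedes it below -/
import Mathlib

section
/- Let G be a connected finite graph with a shortest path v_0,...,v_t of eccentricity k (every vertex of G is within distance k of some v_i). Let P = x_0,...,x_s be any shortest path in G, and let i_min (resp. i_max) be the smallest (resp. largest) index i such that d(v_i, P) ≤ k. Then for every i with i_min ≤ i ≤ i_max, d(v_i, P) ≤ 2k. -/
open SimpleGraph

variable {V : Type*}

/-- Distance from a vertex `x` to (the support of) a walk `p`. -/
noncomputable def walkDist (G : SimpleGraph V) {u v : V} (x : V) (p : G.Walk u v) : ℕ :=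
  sInf {n | ∃ w ∈ p.support, G.dist x w = n}

/-- A walk is a shortest path when its length equals the distance between its ends. -/
noncomputable def IsShortestPath (G : SimpleGraph V) {u v : V} (p : G.Walk u v) : Prop :=
  p.length = G.dist u v

/-- Eccentricity of a walk: the largest distance from any vertex to the walk. -/
noncomputable def walkEcc [Fintype V] (G : SimpleGraph V) {u v : V} (p : G.Walk u v) : ℕ :=
  sSup {n | ∃ x : V, walkDist G x p = n}

/-- A diameter: a shortest path of maximum length among all distances. -/
noncomputable def IsDiameter [Fintype V] (G : SimpleGraph V) {u v : V} (p : G.Walk u v) : Prop :=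
  IsShortestPath G p ∧ ∀ a b : V, G.dist a b ≤ p.length

/-- `k(G)`: minimum eccentricity over all shortest paths. -/
noncomputable def minK [Fintype V] (G : SimpleGraph V) : ℕ :=
  sInf {n | ∃ (u v : V) (p : G.Walk u v), IsShortestPath G p ∧ walkEcc G p = n}

/-- `l(G)`: minimum eccentricity over all diameters. -/
noncomputable def minL [Fintype V] (G : SimpleGraph V) : ℕ :=
  sInf {n | ∃ (u v : V) (p : G.Walk u v), IsDiameter G p ∧ walkEcc G p = n}

/-- `s(G)`: maximum eccentricity over all diameters. -/
noncomputable def maxS [Fintype V] (G : SimpleGraph V) : ℕ :=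
  sSup {n | ∃ (u v : V) (p : G.Walk u v), IsDiameter G p ∧ walkEcc G p = n}

/-!
Suppose `d(v_i, Q) > 2k`. Every vertex of `Q` is within `k` of some `v_c`, and such a `v_c` is
then within `k` of `Q`, so `c` lies outside the window `[i - k, i + k]`. As `P` is a shortest
path, the indices attached to two adjacent vertices of `Q` differ by at most `2k + 1`, so they
cannot lie on opposite sides of the window: the side is constant along `Q`. But `v_imin` and
`v_imax` are within `k` of vertices of `Q` and lie on opposite sides.
-/

namespace SimpleGraph.Walk

variable {G : SimpleGraph V} {u v : V}

lemma dist_getVert_le (p : G.Walk u v) {i j : ℕ} (hij : i ≤ j) :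
    G.dist (p.getVert i) (p.getVert j) ≤ j - i := by
  have h := dist_le ((p.drop i).take (j - i))
  rw [take_length, drop_length] at h
  rw [drop_getVert, Nat.add_sub_cancel' hij] at h
  omega

lemma dist_getVert_le_of_le_add (p : G.Walk u v) {i j n : ℕ} (hi : i ≤ j + n) (hj : j ≤ i + n) :
    G.dist (p.getVert i) (p.getVert j) ≤ n := by
  rcases le_total i j with hij | hji
  · exact (p.dist_getVert_le hij).trans (by omega)
  · rw [dist_comm]
    exact (p.dist_getVert_le hji).trans (by omega)

lemma iff_start_of_mem_support {q : V → Prop} (p : G.Walk u v)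
    (hq : ∀ d ∈ p.darts, (q d.fst ↔ q d.snd)) {x : V} (hx : x ∈ p.support) : q x ↔ q u := by
  induction p with
  | nil => rw [mem_support_nil_iff.1 hx]
  | cons h p ih =>
    rw [darts_cons, List.forall_mem_cons] at hq
    rcases List.mem_cons.1 (support_cons _ _ ▸ hx) with rfl | hx
    · rfl
    · exact (ih hq.2 hx).trans hq.1.symm

end SimpleGraph.Walk

section

variable {G : SimpleGraph V} {u v : V}

lemma IsShortestPath.dist_getVert {p : G.Walk u v} (hp : IsShortestPath G p) {i j : ℕ}
    (hij : i ≤ j) (hj : j ≤ p.length) : G.dist (p.getVert i) (p.getVert j) = j - i := by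
  refine le_antisymm (p.dist_getVert_le hij) ?_
  have hu : G.dist u (p.getVert i) ≤ i := by simpa using p.dist_getVert_le (Nat.zero_le i)
  have hv : G.dist (p.getVert j) v ≤ p.length - j := by
    simpa using p.dist_getVert_le hj
  have h₁ := (p.take i).reachable.dist_triangle_left v
  have h₂ := (p.drop j).reachable.dist_triangle_right (p.getVert i)
  unfold IsShortestPath at hp
  omega

lemma IsShortestPath.le_add_of_dist_getVert_le {p : G.Walk u v} (hp : IsShortestPath G p)
    {a b n : ℕ} (hb : b ≤ p.length) (h : G.dist (p.getVert a) (p.getVert b) ≤ n) :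
    b ≤ a + n := by
  rcases le_total a b with hab | hba
  · have := hp.dist_getVert hab hb
    omega
  · omega

lemma walkDist_le_iff {x : V} {p : G.Walk u v} {n : ℕ} :
    walkDist G x p ≤ n ↔ ∃ w ∈ p.support, G.dist x w ≤ n := by
  set S := {m | ∃ w ∈ p.support, G.dist x w = m}
  change sInf S ≤ n ↔ _
  constructor
  · intro h
    obtain ⟨w, hw, hd⟩ : sInf S ∈ S := Nat.sInf_mem ⟨G.dist x u, u, p.start_mem_support, rfl⟩
    exact ⟨w, hw, hd.trans_le h⟩
  · rintro ⟨w, hw, hd⟩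
    exact (Nat.sInf_le (show G.dist x w ∈ S from ⟨w, hw, rfl⟩)).trans hd

lemma walkDist_le_dist_add (hG : G.Connected) (p : G.Walk u v)
    (x y : V) : walkDist G x p ≤ G.dist x y + walkDist G y p := by
  obtain ⟨w, hw, hd⟩ := walkDist_le_iff.1 (le_refl (walkDist G y p))
  exact walkDist_le_iff.2 ⟨w, hw, (hG.dist_triangle (v := y)).trans (by omega)⟩

lemma exists_getVert_dist_le {x : V} {p : G.Walk u v} {n : ℕ}
    (h : walkDist G x p ≤ n) : ∃ c ≤ p.length, G.dist x (p.getVert c) ≤ n := by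
  obtain ⟨w, hw, hd⟩ := walkDist_le_iff.1 h
  obtain ⟨c, rfl, hc⟩ := Walk.mem_support_iff_exists_getVert.1 hw
  exact ⟨c, hc, hd⟩

lemma IsShortestPath.exists_close_index_walkDist_le (hG : G.Connected) {P : G.Walk u v}
    (hP : IsShortestPath G P) {k : ℕ} {x y : V} (Q : G.Walk x y)
    (hecc : ∀ z ∈ Q.support, walkDist G z P ≤ k) {a i b : ℕ}
    (hai : a ≤ i) (hib : i ≤ b) (hb : b ≤ P.length)
    (hna : walkDist G (P.getVert a) Q ≤ k) (hnb : walkDist G (P.getVert b) Q ≤ k) :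
    ∃ c, i ≤ c + k ∧ c ≤ i + k ∧ walkDist G (P.getVert c) Q ≤ k := by
  by_contra! hfar
  let onLeft (z : V) : Prop := ∃ c, c + k < i ∧ G.dist z (P.getVert c) ≤ k
  have index_left : ∀ y z, onLeft y → G.dist y z ≤ 1 → z ∈ Q.support →
      ∀ c ≤ P.length, G.dist z (P.getVert c) ≤ k → c + k < i := by
    rintro y z ⟨c₀, hc₀, hy⟩ hyz hz c hc hzc
    have hnear : walkDist G (P.getVert c) Q ≤ k :=
      walkDist_le_iff.2 ⟨z, hz, by rwa [dist_comm]⟩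
    have hgap : c ≤ c₀ + (2 * k + 1) := by
      refine hP.le_add_of_dist_getVert_le hc ?_
      have h₁ := hG.dist_triangle (u := P.getVert c₀) (v := y) (w := P.getVert c)
      have h₂ := hG.dist_triangle (u := y) (v := z) (w := P.getVert c)
      rw [dist_comm] at hy
      omega
    by_contra hc'
    exact (hfar c (by omega) (by omega)).not_ge hnear
  have onLeft_of_dist_le_one : ∀ y z, onLeft y → G.dist y z ≤ 1 → z ∈ Q.support → onLeft z := by
    intro y z hy hyz hz
    obtain ⟨c, hc, hzc⟩ := exists_getVert_dist_le (hecc z hz)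
    exact ⟨c, index_left y z hy hyz hz c hc hzc, hzc⟩
  have onLeft_iff : ∀ w ∈ Q.support, onLeft w ↔ onLeft x := fun w =>
    Q.iff_start_of_mem_support fun d hd =>
      ⟨fun h => onLeft_of_dist_le_one _ _ h (dist_eq_one_iff_adj.2 d.adj).le
          (Q.dart_snd_mem_support_of_mem_darts hd),
        fun h => onLeft_of_dist_le_one _ _ h (dist_eq_one_iff_adj.2 d.adj.symm).le
          (Q.dart_fst_mem_support_of_mem_darts hd)⟩
  obtain ⟨wa, hwa, hda⟩ := walkDist_le_iff.1 hna
  obtain ⟨wb, hwb, hdb⟩ := walkDist_le_iff.1 hnb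
  have hleft_a : onLeft wa := by
    refine ⟨a, ?_, by rwa [dist_comm]⟩
    by_contra h
    exact (hfar a (by omega) (by omega)).not_ge hna
  have hleft_b : onLeft wb := (onLeft_iff wb hwb).2 ((onLeft_iff wa hwa).1 hleft_a)
  have hb_left := index_left wb wb hleft_b (by simp) hwb b hb (by rwa [dist_comm])
  omega

end

theorem stmt0_general (G : SimpleGraph V) (hG : G.Connected)
    {v0 vt x0 xs : V} (P : G.Walk v0 vt) (hP : IsShortestPath G P) (k : ℕ)
    (hecc : ∀ z : V, walkDist G z P ≤ k)
    (Q : G.Walk x0 xs)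
    (imin imax : ℕ)
    (himin2 : walkDist G (P.getVert imin) Q ≤ k)
    (himax1 : imax ≤ P.length) (himax2 : walkDist G (P.getVert imax) Q ≤ k) :
    ∀ i, imin ≤ i → i ≤ imax → walkDist G (P.getVert i) Q ≤ 2 * k := by
  intro i hi₁ hi₂
  obtain ⟨c, hic, hci, hc⟩ :=
    hP.exists_close_index_walkDist_le hG Q (fun z _ => hecc z) hi₁ hi₂ himax1 himin2 himax2
  calc walkDist G (P.getVert i) Q
      ≤ G.dist (P.getVert i) (P.getVert c) + walkDist G (P.getVert c) Q :=
        walkDist_le_dist_add hG Q _ _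
    _ ≤ k + k := add_le_add (P.dist_getVert_le_of_le_add hic hci) hc
    _ = 2 * k := (two_mul k).symm

theorem stmt0 [Fintype V] (G : SimpleGraph V) (hG : G.Connected)
    {v0 vt x0 xs : V} (P : G.Walk v0 vt) (hP : IsShortestPath G P) (k : ℕ)
    (hecc : ∀ z : V, walkDist G z P ≤ k)
    (Q : G.Walk x0 xs) (hQ : IsShortestPath G Q)
    (imin imax : ℕ)
    (himin1 : imin ≤ P.length) (himin2 : walkDist G (P.getVert imin) Q ≤ k)
    (himin3 : ∀ i < imin, ¬ walkDist G (P.getVert i) Q ≤ k)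
    (himax1 : imax ≤ P.length) (himax2 : walkDist G (P.getVert imax) Q ≤ k)
    (himax3 : ∀ i, i ≤ P.length → imax < i → ¬ walkDist G (P.getVert i) Q ≤ k) :
    ∀ i, imin ≤ i → i ≤ imax → walkDist G (P.getVert i) Q ≤ 2 * k :=
  stmt0_general G hG P hP k hecc Q imin imax himin2 himax1 himax2
end

section
/- Let G be a connected graph with a shortest path v_0,...,v_t of eccentricity k. Let r be any vertex, x a vertex maximizing d(r,x), and let v_i, v_j be vertices of the path with d(r,v_i) ≤ k and d(x,v_j) ≤ k. Then d(v_i,v_t) - 3k ≤ d(v_i,v_j) and d(v_i,v_0) - 3k ≤ d(v_i,v_j); consequently v_j is at distance at most 3k from v_0 or from v_t. -/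
open SimpleGraph

variable {V : Type*}

/-!
Since `x` is farthest from `r`, every vertex `w` satisfies
`d(vᵢ, w) ≤ d(vᵢ, r) + d(r, x) ≤ k + (k + d(vᵢ, vⱼ) + k)`. Along a shortest path the distance
between two of its vertices is the difference of their indices, so applying this bound to the end
lying beyond `vⱼ` as seen from `vᵢ` puts `vⱼ` within `3k` of that end.
-/

namespace SimpleGraph

variable {G : SimpleGraph V} {u v : V}

theorem Walk.dist_getVert_le_s4 (p : G.Walk u v) {a b : ℕ} (hab : a ≤ b) :
    G.dist (p.getVert a) (p.getVert b) ≤ b - a := by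
  have hend : (p.drop a).getVert (b - a) = p.getVert b := by
    rw [drop_getVert, Nat.add_sub_cancel' hab]
  calc G.dist (p.getVert a) (p.getVert b)
      = G.dist (p.getVert a) ((p.drop a).getVert (b - a)) := by rw [hend]
    _ ≤ ((p.drop a).take (b - a)).length := dist_le _
    _ ≤ b - a := by rw [take_length]; exact min_le_left _ _

theorem Connected.dist_le_of_farthest (hG : G.Connected) {r x a b : V} {k : ℕ}
    (hx : ∀ w, G.dist r w ≤ G.dist r x) (hra : G.dist r a ≤ k) (hxb : G.dist x b ≤ k) (w : V) :
    G.dist a w ≤ G.dist a b + 3 * k := by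
  rw [dist_comm] at hxb
  calc G.dist a w ≤ G.dist a r + G.dist r w := hG.dist_triangle
    _ ≤ G.dist a r + G.dist r x := by gcongr; exact hx w
    _ ≤ G.dist a r + (G.dist r a + (G.dist a b + G.dist b x)) := by
      gcongr
      exact hG.dist_triangle.trans (by gcongr; exact hG.dist_triangle)
    _ ≤ G.dist a b + 3 * k := by rw [dist_comm (u := a)]; omega

end SimpleGraph

namespace IsShortestPath

variable {G : SimpleGraph V} {u v : V} {p : G.Walk u v}

theorem dist_getVert_s4 (hp : IsShortestPath G p) {a b : ℕ} (hab : a ≤ b) (hb : b ≤ p.length) :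
    G.dist (p.getVert a) (p.getVert b) = b - a := by
  have hua : G.dist u (p.getVert a) ≤ a := by simpa using p.dist_getVert_le_s4 a.zero_le
  have hbv : G.dist (p.getVert b) v ≤ p.length - b := by simpa using p.dist_getVert_le_s4 hb
  have hab' := p.dist_getVert_le_s4 hab
  have htri : G.dist u v ≤ G.dist u (p.getVert a) + G.dist (p.getVert a) (p.getVert b)
      + G.dist (p.getVert b) v :=
    (SimpleGraph.Reachable.dist_triangle_right ⟨p.drop b⟩ _).trans <| by
      gcongr; exact SimpleGraph.Reachable.dist_triangle_left ⟨p.take a⟩ _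
  unfold IsShortestPath at hp
  omega

theorem dist_getVert_start (hp : IsShortestPath G p) {a : ℕ} (ha : a ≤ p.length) :
    G.dist (p.getVert a) u = a := by
  simpa [SimpleGraph.dist_comm] using hp.dist_getVert_s4 a.zero_le ha

theorem dist_getVert_end (hp : IsShortestPath G p) {a : ℕ} (ha : a ≤ p.length) :
    G.dist (p.getVert a) v = p.length - a := by
  simpa using hp.dist_getVert_s4 ha le_rfl

theorem dist_getVert_start_le_or_end_le (hp : IsShortestPath G p) {i j c : ℕ}
    (hi : i ≤ p.length) (hj : j ≤ p.length)
    (hv : G.dist (p.getVert i) v ≤ G.dist (p.getVert i) (p.getVert j) + c)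
    (hu : G.dist (p.getVert i) u ≤ G.dist (p.getVert i) (p.getVert j) + c) :
    G.dist (p.getVert j) u ≤ c ∨ G.dist (p.getVert j) v ≤ c := by
  rw [hp.dist_getVert_start hj, hp.dist_getVert_end hj]
  rw [hp.dist_getVert_start hi] at hu
  rw [hp.dist_getVert_end hi] at hv
  rcases le_total i j with hij | hji
  · rw [hp.dist_getVert_s4 hij hj] at hu hv
    omega
  · rw [SimpleGraph.dist_comm, hp.dist_getVert_s4 hji hi] at hu hv
    omega

end IsShortestPath

theorem stmt4_general (G : SimpleGraph V) (hG : G.Connected)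
    {v0 vt : V} (P : G.Walk v0 vt) (hP : IsShortestPath G P) (k : ℕ)
    (r x : V) (hx : ∀ w : V, G.dist r w ≤ G.dist r x)
    (i j : ℕ) (hi : i ≤ P.length) (hj : j ≤ P.length)
    (hri : G.dist r (P.getVert i) ≤ k) (hxj : G.dist x (P.getVert j) ≤ k) :
    G.dist (P.getVert i) vt ≤ G.dist (P.getVert i) (P.getVert j) + 3 * k ∧
    G.dist (P.getVert i) v0 ≤ G.dist (P.getVert i) (P.getVert j) + 3 * k ∧
    (G.dist (P.getVert j) v0 ≤ 3 * k ∨ G.dist (P.getVert j) vt ≤ 3 * k) := by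
  have hend := hG.dist_le_of_farthest hx hri hxj vt
  have hstart := hG.dist_le_of_farthest hx hri hxj v0
  exact ⟨hend, hstart, hP.dist_getVert_start_le_or_end_le hi hj hend hstart⟩

theorem stmt4 [Fintype V] (G : SimpleGraph V) (hG : G.Connected)
    {v0 vt : V} (P : G.Walk v0 vt) (hP : IsShortestPath G P) (k : ℕ)
    (hecc : ∀ z : V, walkDist G z P ≤ k)
    (r x : V) (hx : ∀ w : V, G.dist r w ≤ G.dist r x)
    (i j : ℕ) (hi : i ≤ P.length) (hj : j ≤ P.length)
    (hri : G.dist r (P.getVert i) ≤ k) (hxj : G.dist x (P.getVert j) ≤ k) :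
    G.dist (P.getVert i) vt ≤ G.dist (P.getVert i) (P.getVert j) + 3 * k ∧
    G.dist (P.getVert i) v0 ≤ G.dist (P.getVert i) (P.getVert j) + 3 * k ∧
    (G.dist (P.getVert j) v0 ≤ 3 * k ∨ G.dist (P.getVert j) vt ≤ 3 * k) :=
  stmt4_general G hG P hP k r x hx i j hi hj hri hxj
end

section
/- For every integer k ≥ 1 there exists a connected graph G_k with k(G_k) = l(G_k) = s(G_k) = k. Concretely, the graph consisting of a path P of length 4k with a pendant path of length k attached at its middle vertex satisfies: P is the unique diameter, P is a minimum eccentricity shortest path, and ecc(P) = k. -/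
open SimpleGraph

variable {V : Type*}

/-!
Instead of the path with a pendant path we take the cycle `C_n` on `Fin n`, `n = 4k - 1`, where
`dist x y = min ((y - x) mod n, (x - y) mod n)`.
Its diameter is `2k - 1`. Two vertices at distance `2k - 1` cut the cycle into arcs of lengths
`2k - 1` and `2k`, so every vertex is within `k` of one of them: every diameter has eccentricity
at most `k`. Conversely, a geodesic is an arc of at most `2k` vertices, and the vertex `k` steps
before its start lies at distance at least `k` from all of it, so every shortest path has
eccentricity at least `k`.
-/

section WalkEccentricity

variable {G : SimpleGraph V} {u v : V}

theorem dist_add_dist_of_mem_support {p : G.Walk u v} (hp : IsShortestPath G p) {w : V}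
    (hw : w ∈ p.support) : G.dist u w + G.dist w v = G.dist u v := by
  classical
  have hu := dist_le (p.takeUntil w hw)
  have hv := dist_le (p.dropUntil w hw)
  have hlen : (p.takeUntil w hw).length + (p.dropUntil w hw).length = p.length := by
    rw [← Walk.length_append, p.take_spec hw]
  have htri := (p.takeUntil w hw).reachable.dist_triangle_left v
  unfold IsShortestPath at hp
  omega

theorem walkDist_le_dist (x : V) {p : G.Walk u v} {w : V} (hw : w ∈ p.support) :
    walkDist G x p ≤ G.dist x w :=
  Nat.sInf_le ⟨w, hw, rfl⟩

theorem le_walkDist {x : V} {p : G.Walk u v} {m : ℕ} (h : ∀ w ∈ p.support, m ≤ G.dist x w) :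
    m ≤ walkDist G x p :=
  le_csInf ⟨_, u, p.start_mem_support, rfl⟩ (by rintro _ ⟨w, hw, rfl⟩; exact h w hw)

variable [Fintype V]

theorem walkDist_le_walkEcc (x : V) (p : G.Walk u v) : walkDist G x p ≤ walkEcc G p :=
  le_csSup (Set.finite_range fun y => walkDist G y p).bddAbove ⟨x, rfl⟩

theorem walkEcc_le {p : G.Walk u v} {m : ℕ} (h : ∀ x, walkDist G x p ≤ m) : walkEcc G p ≤ m :=
  csSup_le ⟨_, u, rfl⟩ (by rintro _ ⟨x, rfl⟩; exact h x)

theorem walkEcc_le_of_forall_dist_le_or_dist_le {p : G.Walk u v} {m : ℕ}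
    (h : ∀ x, G.dist x u ≤ m ∨ G.dist x v ≤ m) : walkEcc G p ≤ m :=
  walkEcc_le fun x => (h x).elim (le_trans (walkDist_le_dist x p.start_mem_support))
    (le_trans (walkDist_le_dist x p.end_mem_support))

theorem le_walkEcc_of_forall_le_dist {p : G.Walk u v} {x : V} {m : ℕ}
    (h : ∀ w ∈ p.support, m ≤ G.dist x w) : m ≤ walkEcc G p :=
  (le_walkDist h).trans (walkDist_le_walkEcc x p)

end WalkEccentricity

theorem Fin.val_sub_add_val_sub {n : ℕ} [NeZero n] (a b c : Fin n) :
    (c - a).val = (b - a).val + (c - b).val ∨ (c - a).val + n = (b - a).val + (c - b).val := by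
  rw [show c - a = (b - a) + (c - b) by abel, Fin.val_add_eq_ite]
  split_ifs <;> omega

theorem Fin.val_sub_add_val_sub_rev {n : ℕ} [NeZero n] (a b : Fin n) :
    (b - a).val + (a - b).val = 0 ∨ (b - a).val + (a - b).val = n := by
  have := Fin.val_sub_add_val_sub a b a
  rw [sub_self, Fin.val_zero] at this
  omega

section CycleGraph

variable {n : ℕ} [NeZero n]

theorem cycleGraph_connected_of_neZero : (cycleGraph n).Connected :=
  { preconnected := cycleGraph_preconnected, nonempty := ⟨0⟩ }

theorem cycleGraph_dist_add_one_le (x : Fin n) : (cycleGraph n).dist x (x + 1) ≤ 1 := by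
  by_cases h : x + 1 = x
  · simp [h]
  · refine (dist_eq_one_iff_adj.mpr (cycleGraph_adj'.mpr (Or.inr ?_))).le
    rw [add_sub_cancel_left, Fin.val_one', Nat.one_mod_eq_one]
    rintro rfl
    exact h (Subsingleton.elim _ _)

open Fin.NatCast in
theorem cycleGraph_dist_add_natCast_le (x : Fin n) (m : ℕ) :
    (cycleGraph n).dist x (x + (m : Fin n)) ≤ m := by
  induction m with
  | zero => simp
  | succ m ih =>
    rw [Nat.cast_succ, ← add_assoc]
    have htri := cycleGraph_connected_of_neZero.dist_triangle (u := x) (v := x + (m : Fin n))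
      (w := x + (m : Fin n) + 1)
    have hstep := cycleGraph_dist_add_one_le (x + (m : Fin n))
    omega

open Fin.NatCast in
theorem cycleGraph_dist_le_val_sub (x y : Fin n) : (cycleGraph n).dist x y ≤ (y - x).val := by
  simpa using cycleGraph_dist_add_natCast_le x (y - x).val

theorem cycleGraph_min_val_sub_le_length {x y : Fin n} (p : (cycleGraph n).Walk x y) :
    min (y - x).val (x - y).val ≤ p.length := by
  induction p with
  | nil => simp
  | @cons x w y hadj p ih =>
    rw [cycleGraph_adj'] at hadj
    have := Fin.val_sub_add_val_sub y w x
    have := Fin.val_sub_add_val_sub_rev x y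
    have := Fin.val_sub_add_val_sub_rev w y
    have := Fin.val_sub_add_val_sub_rev x w
    rw [Walk.length_cons]
    omega

theorem cycleGraph_dist_eq (x y : Fin n) :
    (cycleGraph n).dist x y = min (y - x).val (x - y).val := by
  refine le_antisymm (le_min (cycleGraph_dist_le_val_sub x y) ?_) ?_
  · exact dist_comm (G := cycleGraph n) ▸ cycleGraph_dist_le_val_sub y x
  · obtain ⟨p, hp⟩ := cycleGraph_connected_of_neZero.exists_walk_length_eq_dist x y
    exact hp ▸ cycleGraph_min_val_sub_le_length p

theorem cycleGraph_dist_le_half (x y : Fin n) : (cycleGraph n).dist x y ≤ n / 2 := by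
  rw [cycleGraph_dist_eq]
  have := Fin.val_sub_add_val_sub_rev x y
  omega

theorem cycleGraph_exists_dist_eq_half : ∃ x y : Fin n, (cycleGraph n).dist x y = n / 2 := by
  have hlt : n / 2 < n := Nat.div_lt_self (Nat.pos_of_neZero n) one_lt_two
  refine ⟨0, ⟨n / 2, hlt⟩, ?_⟩
  have := Fin.val_sub_add_val_sub_rev 0 (⟨n / 2, hlt⟩ : Fin n)
  rw [cycleGraph_dist_eq]
  simp only [sub_zero] at this ⊢
  omega

/-- Three points cut the cycle into three arcs of total length `n`, each at least as long as the
distance between its ends. -/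
theorem cycleGraph_dist_add_dist_add_dist_le (u x v : Fin n) :
    (cycleGraph n).dist u x + (cycleGraph n).dist x v + (cycleGraph n).dist v u ≤ n := by
  simp only [cycleGraph_dist_eq]
  have := Fin.val_sub_add_val_sub v x u
  have := Fin.val_sub_add_val_sub_rev u x
  have := Fin.val_sub_add_val_sub_rev x v
  have := Fin.val_sub_add_val_sub_rev v u
  omega

theorem cycleGraph_dist_le_or_dist_le_of_dist_eq {k : ℕ} (hn : n + 1 = 4 * k) {u v : Fin n}
    (huv : (cycleGraph n).dist u v = n / 2) (x : Fin n) :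
    (cycleGraph n).dist x u ≤ k ∨ (cycleGraph n).dist x v ≤ k := by
  have := cycleGraph_dist_add_dist_add_dist_le u x v
  rw [dist_comm (u := u) (v := x), dist_comm (u := v) (v := u)] at this
  omega

theorem cycleGraph_exists_far_from_geodesic {k : ℕ} (hn : n + 1 = 4 * k) (u v : Fin n) :
    ∃ x, ∀ w, (cycleGraph n).dist u w + (cycleGraph n).dist w v = (cycleGraph n).dist u v →
      k ≤ (cycleGraph n).dist x w := by
  wlog h : (v - u).val ≤ (u - v).val generalizing u v
  · obtain ⟨x, hx⟩ := this v u (by omega)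
    refine ⟨x, fun w hw => hx w ?_⟩
    rw [dist_comm (u := v), dist_comm (u := w) (v := u), dist_comm (u := v)]
    omega
  -- The geodesic now runs forward from `u`, so it stays in the arc of length `dist u v ≤ 2k - 1`
  -- after `u`; the vertex `k` steps before `u` is at distance at least `k` from that arc.
  refine ⟨u - ⟨k, by omega⟩, fun w hw => ?_⟩
  have hk : (u - (u - ⟨k, by omega⟩)).val = k := by rw [sub_sub_cancel]
  have := Fin.val_sub_add_val_sub (u - ⟨k, by omega⟩) u w
  have := Fin.val_sub_add_val_sub u w v
  have := Fin.val_sub_add_val_sub_rev u w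
  have := Fin.val_sub_add_val_sub_rev w v
  have := Fin.val_sub_add_val_sub_rev (u - ⟨k, by omega⟩) w
  simp only [cycleGraph_dist_eq] at hw ⊢
  omega

theorem cycleGraph_le_walkEcc {k : ℕ} (hn : n + 1 = 4 * k) {u v : Fin n}
    {p : (cycleGraph n).Walk u v} (hp : IsShortestPath (cycleGraph n) p) :
    k ≤ walkEcc (cycleGraph n) p := by
  obtain ⟨x, hx⟩ := cycleGraph_exists_far_from_geodesic hn u v
  exact le_walkEcc_of_forall_le_dist fun w hw => hx w (dist_add_dist_of_mem_support hp hw)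

theorem cycleGraph_isDiameter_iff {u v : Fin n} {p : (cycleGraph n).Walk u v} :
    IsDiameter (cycleGraph n) p ↔
      IsShortestPath (cycleGraph n) p ∧ (cycleGraph n).dist u v = n / 2 := by
  refine ⟨fun ⟨hp, hmax⟩ => ⟨hp, ?_⟩, fun ⟨hp, huv⟩ => ⟨hp, fun a b => ?_⟩⟩
  · obtain ⟨x, y, hxy⟩ := cycleGraph_exists_dist_eq_half (n := n)
    have := hmax x y
    have := cycleGraph_dist_le_half u v
    unfold IsShortestPath at hp
    omega
  · rw [hp, huv]
    exact cycleGraph_dist_le_half a b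

theorem cycleGraph_walkEcc_eq_of_isDiameter {k : ℕ} (hn : n + 1 = 4 * k) {u v : Fin n}
    {p : (cycleGraph n).Walk u v} (hp : IsDiameter (cycleGraph n) p) :
    walkEcc (cycleGraph n) p = k :=
  le_antisymm
    (walkEcc_le_of_forall_dist_le_or_dist_le
      (cycleGraph_dist_le_or_dist_le_of_dist_eq hn (cycleGraph_isDiameter_iff.mp hp).2))
    (cycleGraph_le_walkEcc hn hp.1)

theorem cycleGraph_exists_isDiameter :
    ∃ (u v : Fin n) (p : (cycleGraph n).Walk u v), IsDiameter (cycleGraph n) p := by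
  obtain ⟨x, y, hxy⟩ := cycleGraph_exists_dist_eq_half (n := n)
  obtain ⟨p, hp⟩ := cycleGraph_connected_of_neZero.exists_walk_length_eq_dist x y
  exact ⟨x, y, p, cycleGraph_isDiameter_iff.mpr ⟨hp, hxy⟩⟩

end CycleGraph

theorem stmt11 :
    ∀ k : ℕ, 1 ≤ k →
      ∃ (V : Type) (_ : Fintype V) (G : SimpleGraph V), G.Connected ∧
        minK G = k ∧ minL G = k ∧ maxS G = k := by
  intro k hk
  have : NeZero (4 * k - 1) := ⟨by omega⟩
  have hn : 4 * k - 1 + 1 = 4 * k := by omega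
  obtain ⟨u, v, p, hp⟩ := cycleGraph_exists_isDiameter (n := 4 * k - 1)
  have hpk := cycleGraph_walkEcc_eq_of_isDiameter hn hp
  refine ⟨Fin (4 * k - 1), inferInstance, cycleGraph (4 * k - 1),
    cycleGraph_connected_of_neZero, ?_, ?_, ?_⟩
  · refine IsLeast.csInf_eq ⟨⟨u, v, p, hp.1, hpk⟩, ?_⟩
    rintro _ ⟨u, v, p, hp, rfl⟩
    exact cycleGraph_le_walkEcc hn hp
  · refine IsLeast.csInf_eq ⟨⟨u, v, p, hp, hpk⟩, ?_⟩
    rintro _ ⟨u, v, p, hp, rfl⟩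
    exact (cycleGraph_walkEcc_eq_of_isDiameter hn hp).ge
  · refine IsGreatest.csSup_eq ⟨⟨u, v, p, hp, hpk⟩, ?_⟩
    rintro _ ⟨u, v, p, hp, rfl⟩
    exact (cycleGraph_walkEcc_eq_of_isDiameter hn hp).le
end

section
/- Let G be a connected graph, D = x_0,...,x_s a diameter, and P = v_0,...,v_t a shortest path of eccentricity k. Suppose v_l, v_m (l ≤ m) satisfy d(v_l,x_0) ≤ k and d(v_m,x_s) ≤ k, and suppose there is no index a ≤ i with d(v_a, D) ≤ k, where v_i is within distance k of some fixed vertex z. Then d(v_i, v_l) ≤ 2k, and consequently d(z, x_0) ≤ 4k. -/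
open SimpleGraph

variable {V : Type*}

/-!
Since `v_l` is within `k` of `x_0 ∈ D` while no `v_a` with `a ≤ i` is within `k` of `D`, we have
`i < l`. Going from `x_0` to `v_l`, along `P` to `v_m`, and on to `x_s` gives
`diam G ≤ k + (m - l) + k`; as `P` is a shortest path, `l + (m - l) ≤ |P| ≤ diam G`, so `l ≤ 2k`.
Hence `d(v_i, v_l) ≤ l - i ≤ 2k`, and the triangle inequality through `v_i` and `v_l` gives
`d(z, x_0) ≤ k + 2k + k`.
-/

lemma SimpleGraph.Walk.dist_getVert_le_sub {G : SimpleGraph V} {u v : V} (p : G.Walk u v)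
    {a b : ℕ} (hab : a ≤ b) : G.dist (p.getVert a) (p.getVert b) ≤ b - a := by
  have hend : (p.drop a).getVert (b - a) = p.getVert b := by
    rw [Walk.drop_getVert, Nat.add_sub_cancel' hab]
  calc G.dist (p.getVert a) (p.getVert b)
      ≤ (((p.drop a).take (b - a)).copy rfl hend).length := dist_le _
    _ ≤ b - a := by simp only [Walk.length_copy, Walk.take_length]; omega

lemma walkDist_le_dist_of_mem_support {G : SimpleGraph V} {u v w : V} (p : G.Walk u v) (x : V)
    (hw : w ∈ p.support) : walkDist G x p ≤ G.dist x w :=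
  Nat.sInf_le ⟨w, hw, rfl⟩

lemma IsShortestPath.length_le_of_isDiameter [Fintype V] {G : SimpleGraph V}
    {u v x y : V} {P : G.Walk u v} (hP : IsShortestPath G P) {D : G.Walk x y}
    (hD : IsDiameter G D) : P.length ≤ D.length :=
  hP ▸ hD.2 u v

lemma IsShortestPath.add_sub_le_of_ends_near_diameter [Fintype V] {G : SimpleGraph V}
    (hG : G.Connected) {x0 xs v0 vt : V} {D : G.Walk x0 xs} (hD : IsDiameter G D)
    {P : G.Walk v0 vt} (hP : IsShortestPath G P) {k l m : ℕ} (hlm : l ≤ m) (hm : m ≤ P.length)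
    (hlx : G.dist (P.getVert l) x0 ≤ k) (hmx : G.dist (P.getVert m) xs ≤ k) :
    l + (P.length - m) ≤ 2 * k := by
  have hlm_dist := P.dist_getVert_le_sub hlm
  have hdiam : P.length ≤ k + (m - l) + k :=
    calc P.length ≤ D.length := hP.length_le_of_isDiameter hD
      _ = G.dist x0 xs := hD.1
      _ ≤ G.dist x0 (P.getVert l) + G.dist (P.getVert l) (P.getVert m)
          + G.dist (P.getVert m) xs :=
        hG.dist_triangle.trans (Nat.add_le_add_right hG.dist_triangle _)
      _ ≤ k + (m - l) + k := by rw [dist_comm]; omega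
  omega

theorem stmt13_general [Fintype V] (G : SimpleGraph V) (hG : G.Connected)
    {x0 xs v0 vt : V} (D : G.Walk x0 xs) (hD : IsDiameter G D)
    (P : G.Walk v0 vt) (hP : IsShortestPath G P) (k : ℕ)
    (l m : ℕ) (hm : m ≤ P.length) (hlm : l ≤ m)
    (hlx : G.dist (P.getVert l) x0 ≤ k) (hmx : G.dist (P.getVert m) xs ≤ k)
    (z : V) (i : ℕ) (hzi : G.dist z (P.getVert i) ≤ k)
    (hno : ∀ a, a ≤ i → ¬ walkDist G (P.getVert a) D ≤ k) :
    G.dist (P.getVert i) (P.getVert l) ≤ 2 * k ∧ G.dist z x0 ≤ 4 * k := by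
  have hil : i < l := Nat.lt_of_not_le fun hli =>
    hno l hli ((walkDist_le_dist_of_mem_support D _ D.start_mem_support).trans hlx)
  have hl2k := hP.add_sub_le_of_ends_near_diameter hG hD hlm hm hlx hmx
  have hil_dist : G.dist (P.getVert i) (P.getVert l) ≤ 2 * k :=
    (P.dist_getVert_le_sub hil.le).trans (by omega)
  refine ⟨hil_dist, ?_⟩
  calc G.dist z x0
      ≤ G.dist z (P.getVert i) + G.dist (P.getVert i) (P.getVert l) + G.dist (P.getVert l) x0 :=
        hG.dist_triangle.trans (Nat.add_le_add_right hG.dist_triangle _)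
    _ ≤ 4 * k := by omega

theorem stmt13 [Fintype V] (G : SimpleGraph V) (hG : G.Connected)
    {x0 xs v0 vt : V} (D : G.Walk x0 xs) (hD : IsDiameter G D)
    (P : G.Walk v0 vt) (hP : IsShortestPath G P) (k : ℕ)
    (hecc : ∀ z : V, walkDist G z P ≤ k)
    (l m : ℕ) (hl : l ≤ P.length) (hm : m ≤ P.length) (hlm : l ≤ m)
    (hlx : G.dist (P.getVert l) x0 ≤ k) (hmx : G.dist (P.getVert m) xs ≤ k)
    (z : V) (i : ℕ) (hi : i ≤ P.length) (hzi : G.dist z (P.getVert i) ≤ k)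
    (hno : ∀ a, a ≤ i → ¬ walkDist G (P.getVert a) D ≤ k) :
    G.dist (P.getVert i) (P.getVert l) ≤ 2 * k ∧ G.dist z x0 ≤ 4 * k :=
  stmt13_general G hG D hD P hP k l m hm hlm hlx hmx z i hzi hno
end
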